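/- Let c₀ > 0 be a constant, let ρ₀, p₀ be constants, and let ρ, p : ℝ³ × ℝ → ℝ, u : ℝ³ × ℝ → ℝ³ and τ : ℝ³ × ℝ → ℝ³ˣ³ be smooth functions. Set p_{ij} = p δ_{ij} − τ_{ij}, and define the perturbations ρ' = ρ − ρ₀ and p' = p − p₀. Assume the continuity equation ∂ρ/∂t + Σⱼ ∂(ρ uⱼ)/∂yⱼ = 0 and the momentum equations ∂(ρ uᵢ)/∂t + Σⱼ ∂(ρ uᵢ uⱼ + p_{ij})/∂yⱼ = 0 for each i. Define the Lighthill stress tensor T_{ij} = ρ uᵢ uⱼ − τ_{ij} + (p' − c₀² ρ') δ_{ij}. Then the density perturbation satisfies the inhomogeneous wave equation ∂²ρ'/∂t² − c₀² Δ ρ' = Σᵢ Σⱼ ∂² T_{ij} / (∂yᵢ ∂yⱼ). -/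

import Mathlib

/-- Time derivative of a function of space `y : ℝ³` and time `t : ℝ`. -/
noncomputable def dT (f : (Fin 3 → ℝ) → ℝ → ℝ) : (Fin 3 → ℝ) → ℝ → ℝ :=
  fun y t => deriv (fun s => f y s) t

/-- Partial derivative in the `j`-th spatial coordinate of a function of
space `y : ℝ³` and time `t : ℝ`. -/
noncomputable def dY (j : Fin 3) (f : (Fin 3 → ℝ) → ℝ → ℝ) :
    (Fin 3 → ℝ) → ℝ → ℝ :=
  fun y t => deriv (fun s => f (Function.update y j s) t) (y j)


noncomputable def pd (v : (Fin 3 → ℝ) × ℝ) (F : (Fin 3 → ℝ) × ℝ → ℝ) :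
    (Fin 3 → ℝ) × ℝ → ℝ :=
  fun q => fderiv ℝ F q v

noncomputable def et : (Fin 3 → ℝ) × ℝ := (0, 1)
noncomputable def ey (j : Fin 3) : (Fin 3 → ℝ) × ℝ := (Pi.single j 1, 0)

lemma pd_contDiff {F : (Fin 3 → ℝ) × ℝ → ℝ} (hF : ContDiff ℝ (⊤ : ℕ∞) F)
    (v : (Fin 3 → ℝ) × ℝ) : ContDiff ℝ (⊤ : ℕ∞) (pd v F) :=
  (hF.fderiv_right (by simp)).clm_apply contDiff_const

lemma pd_comm {F : (Fin 3 → ℝ) × ℝ → ℝ} (hF : ContDiff ℝ (⊤ : ℕ∞) F)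
    (v w : (Fin 3 → ℝ) × ℝ) : pd v (pd w F) = pd w (pd v F) := by
  have hd : ∀ x, HasFDerivAt F (fderiv ℝ F x) x := fun x =>
    (hF.differentiable (by simp) x).hasFDerivAt
  have hf' : ContDiff ℝ (⊤ : ℕ∞) (fderiv ℝ F) := hF.fderiv_right (by simp)
  funext q
  have h2 : HasFDerivAt (fderiv ℝ F) (fderiv ℝ (fderiv ℝ F) q) q :=
    (hf'.differentiable (by simp) q).hasFDerivAt
  have key : ∀ a b : (Fin 3 → ℝ) × ℝ,
      pd a (pd b F) q = fderiv ℝ (fderiv ℝ F) q a b := by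
    intro a b
    have h3 : HasFDerivAt (fun x => fderiv ℝ F x b)
        ((ContinuousLinearMap.apply ℝ ℝ b).comp (fderiv ℝ (fderiv ℝ F) q)) q :=
      (ContinuousLinearMap.apply ℝ ℝ b).hasFDerivAt.comp q h2
    show fderiv ℝ (fun x => fderiv ℝ F x b) q a = _
    rw [h3.fderiv]
    rfl
  rw [key, key]
  exact second_derivative_symmetric hd h2 v w

lemma pd_linear' {G H : (Fin 3 → ℝ) × ℝ → ℝ} (hG : Differentiable ℝ G)
    (hH : Differentiable ℝ H) (a : ℝ) (v : (Fin 3 → ℝ) × ℝ) :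
    pd v (fun q => G q + a * H q) = fun q => pd v G q + a * pd v H q := by
  funext q
  simp only [pd]
  rw [fderiv_fun_add (hG q) ((hH q).const_mul a), fderiv_const_mul (hH q) a]
  simp

lemma pd_linear {G H : (Fin 3 → ℝ) × ℝ → ℝ} (hG : Differentiable ℝ G)
    (hH : Differentiable ℝ H) (a k : ℝ) (v : (Fin 3 → ℝ) × ℝ) :
    pd v (fun q => G q + a * H q + k) = fun q => pd v G q + a * pd v H q := by
  funext q
  have : pd v (fun q => G q + a * H q + k) q = pd v (fun q => G q + a * H q) q := by
    simp only [pd, fderiv_add_const]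
  rw [this, pd_linear' hG hH a v]

lemma pd_neg_sum {G : Fin 3 → (Fin 3 → ℝ) × ℝ → ℝ}
    (hG : ∀ j, Differentiable ℝ (G j)) (v : (Fin 3 → ℝ) × ℝ) :
    pd v (fun q => -(∑ j, G j q)) = fun q => -(∑ j, pd v (G j) q) := by
  funext q
  simp only [pd, fderiv_neg, fderiv_fun_sum (fun j _ => (hG j q))]
  rw [fderiv_fun_neg, fderiv_fun_sum (fun j _ => (hG j q))]
  simp

lemma lighthill_pd (c₀ ρ₀ p₀ : ℝ)
    (R Pf : (Fin 3 → ℝ) × ℝ → ℝ)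
    (U : Fin 3 → (Fin 3 → ℝ) × ℝ → ℝ)
    (Tv : Fin 3 → Fin 3 → (Fin 3 → ℝ) × ℝ → ℝ)
    (hR : ContDiff ℝ (⊤ : ℕ∞) R) (hP : ContDiff ℝ (⊤ : ℕ∞) Pf)
    (hU : ∀ i, ContDiff ℝ (⊤ : ℕ∞) (U i)) (hTv : ∀ i j, ContDiff ℝ (⊤ : ℕ∞) (Tv i j))
    (cont : ∀ q, pd et R q + ∑ j, pd (ey j) (fun q => R q * U j q) q = 0)
    (mom : ∀ i q, pd et (fun q => R q * U i q) q
        + ∑ j, pd (ey j) (fun q => R q * U i q * U j q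
            + (Pf q * (if i = j then (1 : ℝ) else 0) - Tv i j q)) q = 0) :
    ∀ q, pd et (pd et R) q - c₀ ^ 2 * ∑ i, pd (ey i) (pd (ey i) R) q
      = ∑ i, ∑ j, pd (ey i) (pd (ey j) (fun q =>
          R q * U i q * U j q - Tv i j q
            + ((Pf q - p₀) - c₀ ^ 2 * (R q - ρ₀))
              * (if i = j then (1 : ℝ) else 0))) q := by
  intro q
  -- abbreviations
  set RU : Fin 3 → (Fin 3 → ℝ) × ℝ → ℝ := fun j q => R q * U j q with hRU
  set M : Fin 3 → Fin 3 → (Fin 3 → ℝ) × ℝ → ℝ := fun i j q =>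
    R q * U i q * U j q + (Pf q * (if i = j then (1 : ℝ) else 0) - Tv i j q) with hM
  have hRUc : ∀ j, ContDiff ℝ (⊤ : ℕ∞) (RU j) := fun j => hR.mul (hU j)
  have hMc : ∀ i j, ContDiff ℝ (⊤ : ℕ∞) (M i j) := fun i j =>
    ((hR.mul (hU i)).mul (hU j)).add ((hP.mul contDiff_const).sub (hTv i j))
  -- continuity as function equation
  have key1 : pd et R = fun q => -(∑ j, pd (ey j) (RU j) q) := by
    funext q; have := cont q; linarith
  have key2 : ∀ i, pd et (RU i) = fun q => -(∑ j, pd (ey j) (M i j) q) := by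
    intro i; funext q; have := mom i q; linarith
  -- LHS computation
  have lhs1 : pd et (pd et R) q = ∑ j, ∑ i, pd (ey j) (pd (ey i) (M j i)) q := by
    rw [key1, pd_neg_sum (fun j => (pd_contDiff (hRUc j) (ey j)).differentiable (by simp)) et]
    have hc : ∀ j, pd et (pd (ey j) (RU j)) = pd (ey j) (pd et (RU j)) := fun j =>
      pd_comm (hRUc j) et (ey j)
    simp only [hc]
    have h2 : ∀ j, pd (ey j) (pd et (RU j)) q
        = -(∑ i, pd (ey j) (pd (ey i) (M j i)) q) := by
      intro j
      rw [key2 j,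
        pd_neg_sum (fun i => (pd_contDiff (hMc j i) (ey i)).differentiable (by simp)) (ey j)]
    simp only [h2]
    simp
  -- RHS computation: identify the Lighthill tensor
  have hfun : ∀ i j, (fun q => R q * U i q * U j q - Tv i j q
      + ((Pf q - p₀) - c₀ ^ 2 * (R q - ρ₀)) * (if i = j then (1 : ℝ) else 0))
      = fun q => M i j q + (if i = j then -c₀ ^ 2 else 0) * R q
          + (if i = j then c₀ ^ 2 * ρ₀ - p₀ else 0) := by
    intro i j
    funext q
    by_cases h : i = j <;> simp [hM, h] <;> ring
  have rhs1 : ∀ i j, pd (ey i) (pd (ey j) (fun q =>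
      R q * U i q * U j q - Tv i j q
        + ((Pf q - p₀) - c₀ ^ 2 * (R q - ρ₀)) * (if i = j then (1 : ℝ) else 0))) q
      = pd (ey i) (pd (ey j) (M i j)) q
        + (if i = j then -c₀ ^ 2 else 0) * pd (ey i) (pd (ey j) R) q := by
    intro i j
    rw [hfun i j,
      pd_linear ((hMc i j).differentiable (by simp)) (hR.differentiable (by simp)) _ _ (ey j),
      pd_linear' ((pd_contDiff (hMc i j) (ey j)).differentiable (by simp))
        ((pd_contDiff hR (ey j)).differentiable (by simp)) _ (ey i)]
  rw [lhs1]
  simp only [rhs1, Finset.sum_add_distrib]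
  have diag : ∑ i, ∑ j, (if i = j then -c₀ ^ 2 else 0) * pd (ey i) (pd (ey j) R) q
      = -(c₀ ^ 2 * ∑ i, pd (ey i) (pd (ey i) R) q) := by
    simp only [ite_mul, zero_mul, Finset.sum_ite_eq, Finset.mem_univ, if_true]
    rw [Finset.mul_sum, ← Finset.sum_neg_distrib]
    exact Finset.sum_congr rfl fun i _ => by ring
  rw [diag]
  ring

lemma pd_sub_const (F : (Fin 3 → ℝ) × ℝ → ℝ) (c : ℝ) (v : (Fin 3 → ℝ) × ℝ) :
    pd v (fun q => F q - c) = pd v F := by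
  funext q
  simp only [pd, fderiv_sub_const]

lemma dT_eq (f : (Fin 3 → ℝ) → ℝ → ℝ)
    (hf : Differentiable ℝ (fun q : (Fin 3 → ℝ) × ℝ => f q.1 q.2))
    (y : Fin 3 → ℝ) (t : ℝ) :
    dT f y t = pd et (fun q => f q.1 q.2) (y, t) := by
  have h1 : HasDerivAt (fun s : ℝ => ((y, s) : (Fin 3 → ℝ) × ℝ)) et t :=
    (hasDerivAt_const t y).prodMk (hasDerivAt_id t)
  have h2 := (hf (y, t)).hasFDerivAt.comp_hasDerivAt t h1
  exact h2.deriv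

lemma dY_eq (j : Fin 3) (f : (Fin 3 → ℝ) → ℝ → ℝ)
    (hf : Differentiable ℝ (fun q : (Fin 3 → ℝ) × ℝ => f q.1 q.2))
    (y : Fin 3 → ℝ) (t : ℝ) :
    dY j f y t = pd (ey j) (fun q => f q.1 q.2) (y, t) := by
  have hupd : HasDerivAt (fun s : ℝ => Function.update y j s) (Pi.single j 1) (y j) := by
    rw [hasDerivAt_pi]
    intro k
    by_cases hk : k = j
    · subst hk
      simp only [Function.update_apply, Pi.single_apply, if_pos rfl]
      exact hasDerivAt_id _
    · simp only [Function.update_apply, Pi.single_apply, if_neg hk]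
      exact hasDerivAt_const _ _
  have h1 : HasDerivAt (fun s : ℝ => ((Function.update y j s, t) : (Fin 3 → ℝ) × ℝ))
      (ey j) (y j) := hupd.prodMk (hasDerivAt_const _ t)
  have h2 := (hf (Function.update y j (y j), t)).hasFDerivAt.comp_hasDerivAt (y j) h1
  rw [Function.update_eq_self] at h2
  exact h2.deriv


/-- Lighthill's acoustic analogy: for a smooth compressible flow without body
forces, with density `ρ`, pressure `P`, velocity `u`, viscous stress `τ`,
stress tensor `p_{ij} = P δ_{ij} − τ_{ij}`, satisfying the conservative
continuity and momentum equations, the density perturbation `ρ' = ρ − ρ₀`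
satisfies the inhomogeneous wave equation
`∂²ρ'/∂t² − c₀² Δ ρ' = Σᵢ Σⱼ ∂² T_{ij} / (∂yᵢ ∂yⱼ)` with Lighthill stress
tensor `T_{ij} = ρ uᵢ uⱼ − τ_{ij} + (p' − c₀² ρ') δ_{ij}` where
`p' = P − p₀`. -/
theorem lighthill_wave_equation
    (c₀ ρ₀ p₀ : ℝ) (hc₀ : 0 < c₀)
    (ρ P : (Fin 3 → ℝ) → ℝ → ℝ)
    (u : (Fin 3 → ℝ) → ℝ → Fin 3 → ℝ)
    (τ : (Fin 3 → ℝ) → ℝ → Fin 3 → Fin 3 → ℝ)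
    (hρ : ContDiff ℝ (⊤ : ℕ∞) (fun q : (Fin 3 → ℝ) × ℝ => ρ q.1 q.2))
    (hP : ContDiff ℝ (⊤ : ℕ∞) (fun q : (Fin 3 → ℝ) × ℝ => P q.1 q.2))
    (hu : ContDiff ℝ (⊤ : ℕ∞) (fun q : (Fin 3 → ℝ) × ℝ => u q.1 q.2))
    (hτ : ContDiff ℝ (⊤ : ℕ∞) (fun q : (Fin 3 → ℝ) × ℝ => τ q.1 q.2))
    (continuity : ∀ y t,
      dT ρ y t + ∑ j, dY j (fun y t => ρ y t * u y t j) y t = 0)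
    (momentum : ∀ (i : Fin 3) y t,
      dT (fun y t => ρ y t * u y t i) y t
        + ∑ j, dY j (fun y t => ρ y t * u y t i * u y t j
            + (P y t * (if i = j then (1 : ℝ) else 0) - τ y t i j)) y t = 0) :
    ∀ y t,
      dT (dT (fun y t => ρ y t - ρ₀)) y t
          - c₀ ^ 2 * ∑ i, dY i (dY i (fun y t => ρ y t - ρ₀)) y t
        = ∑ i, ∑ j, dY i (dY j (fun y t =>
            ρ y t * u y t i * u y t j - τ y t i j
              + ((P y t - p₀) - c₀ ^ 2 * (ρ y t - ρ₀))
                * (if i = j then (1 : ℝ) else 0))) y t := by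
  have hU : ∀ i, ContDiff ℝ (⊤ : ℕ∞) (fun q : (Fin 3 → ℝ) × ℝ => u q.1 q.2 i) :=
    fun i => contDiff_pi.mp hu i
  have hTv : ∀ i j, ContDiff ℝ (⊤ : ℕ∞) (fun q : (Fin 3 → ℝ) × ℝ => τ q.1 q.2 i j) :=
    fun i j => contDiff_pi.mp (contDiff_pi.mp hτ i) j
  have hρ' : ContDiff ℝ (⊤ : ℕ∞) (fun q : (Fin 3 → ℝ) × ℝ => ρ q.1 q.2 - ρ₀) :=
    hρ.sub contDiff_const
  have hRU : ∀ j, ContDiff ℝ (⊤ : ℕ∞) (fun q : (Fin 3 → ℝ) × ℝ => ρ q.1 q.2 * u q.1 q.2 j) :=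
    fun j => hρ.mul (hU j)
  have hMc : ∀ i j, ContDiff ℝ (⊤ : ℕ∞) (fun q : (Fin 3 → ℝ) × ℝ =>
      ρ q.1 q.2 * u q.1 q.2 i * u q.1 q.2 j
        + (P q.1 q.2 * (if i = j then (1 : ℝ) else 0) - τ q.1 q.2 i j)) :=
    fun i j => ((hρ.mul (hU i)).mul (hU j)).add ((hP.mul contDiff_const).sub (hTv i j))
  have hTij : ∀ i j, ContDiff ℝ (⊤ : ℕ∞) (fun q : (Fin 3 → ℝ) × ℝ =>
      ρ q.1 q.2 * u q.1 q.2 i * u q.1 q.2 j - τ q.1 q.2 i j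
        + ((P q.1 q.2 - p₀) - c₀ ^ 2 * (ρ q.1 q.2 - ρ₀))
          * (if i = j then (1 : ℝ) else 0)) :=
    fun i j => (((hρ.mul (hU i)).mul (hU j)).sub (hTv i j)).add
      (((hP.sub contDiff_const).sub (contDiff_const.mul (hρ.sub contDiff_const))).mul
        contDiff_const)
  -- convert the hypotheses to directional-derivative form
  have cont' : ∀ q : (Fin 3 → ℝ) × ℝ,
      pd et (fun q : (Fin 3 → ℝ) × ℝ => ρ q.1 q.2) q
        + ∑ j, pd (ey j) (fun q : (Fin 3 → ℝ) × ℝ => ρ q.1 q.2 * u q.1 q.2 j) q = 0 := by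
    intro q
    have h := continuity q.1 q.2
    rw [dT_eq ρ (hρ.differentiable (by simp)) q.1 q.2,
      Finset.sum_congr rfl (fun j _ => dY_eq j (fun y t => ρ y t * u y t j)
        ((hRU j).differentiable (by simp)) q.1 q.2)] at h
    exact h
  have mom' : ∀ (i : Fin 3) (q : (Fin 3 → ℝ) × ℝ),
      pd et (fun q : (Fin 3 → ℝ) × ℝ => ρ q.1 q.2 * u q.1 q.2 i) q
        + ∑ j, pd (ey j) (fun q : (Fin 3 → ℝ) × ℝ =>
            ρ q.1 q.2 * u q.1 q.2 i * u q.1 q.2 j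
              + (P q.1 q.2 * (if i = j then (1 : ℝ) else 0) - τ q.1 q.2 i j)) q = 0 := by
    intro i q
    have h := momentum i q.1 q.2
    rw [dT_eq (fun y t => ρ y t * u y t i) ((hRU i).differentiable (by simp)) q.1 q.2,
      Finset.sum_congr rfl (fun j _ => dY_eq j (fun y t => ρ y t * u y t i * u y t j
          + (P y t * (if i = j then (1 : ℝ) else 0) - τ y t i j))
        ((hMc i j).differentiable (by simp)) q.1 q.2)] at h
    exact h
  have main := lighthill_pd c₀ ρ₀ p₀ (fun q => ρ q.1 q.2) (fun q => P q.1 q.2)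
    (fun i q => u q.1 q.2 i) (fun i j q => τ q.1 q.2 i j) hρ hP hU hTv cont' mom'
  intro y t
  -- rewrite the inner derivatives
  have g1 : dT (fun y t => ρ y t - ρ₀)
      = fun y t => pd et (fun q : (Fin 3 → ℝ) × ℝ => ρ q.1 q.2) (y, t) := by
    funext y t
    rw [dT_eq (fun y t => ρ y t - ρ₀) (hρ'.differentiable (by simp)) y t]
    exact congrFun (pd_sub_const (fun q => ρ q.1 q.2) ρ₀ et) (y, t)
  have g1' : ∀ i, dY i (fun y t => ρ y t - ρ₀)
      = fun y t => pd (ey i) (fun q : (Fin 3 → ℝ) × ℝ => ρ q.1 q.2) (y, t) := by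
    intro i
    funext y t
    rw [dY_eq i (fun y t => ρ y t - ρ₀) (hρ'.differentiable (by simp)) y t]
    exact congrFun (pd_sub_const (fun q => ρ q.1 q.2) ρ₀ (ey i)) (y, t)
  have g3 : ∀ i j, dY j (fun y t =>
        ρ y t * u y t i * u y t j - τ y t i j
          + ((P y t - p₀) - c₀ ^ 2 * (ρ y t - ρ₀)) * (if i = j then (1 : ℝ) else 0))
      = fun y t => pd (ey j) (fun q : (Fin 3 → ℝ) × ℝ =>
          ρ q.1 q.2 * u q.1 q.2 i * u q.1 q.2 j - τ q.1 q.2 i j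
            + ((P q.1 q.2 - p₀) - c₀ ^ 2 * (ρ q.1 q.2 - ρ₀))
              * (if i = j then (1 : ℝ) else 0)) (y, t) := by
    intro i j
    funext y t
    exact dY_eq j _ ((hTij i j).differentiable (by simp)) y t
  rw [g1]
  simp only [g1', g3]
  -- rewrite the outer derivatives
  have g2 : dT (fun y t => pd et (fun q : (Fin 3 → ℝ) × ℝ => ρ q.1 q.2) (y, t)) y t
      = pd et (pd et (fun q : (Fin 3 → ℝ) × ℝ => ρ q.1 q.2)) (y, t) :=
    dT_eq _ ((pd_contDiff hρ et).differentiable (by simp)) y t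
  have g2' : ∀ i, dY i (fun y t => pd (ey i) (fun q : (Fin 3 → ℝ) × ℝ => ρ q.1 q.2) (y, t)) y t
      = pd (ey i) (pd (ey i) (fun q : (Fin 3 → ℝ) × ℝ => ρ q.1 q.2)) (y, t) :=
    fun i => dY_eq i _ ((pd_contDiff hρ (ey i)).differentiable (by simp)) y t
  have g4 : ∀ i j, dY i (fun y t => pd (ey j) (fun q : (Fin 3 → ℝ) × ℝ =>
        ρ q.1 q.2 * u q.1 q.2 i * u q.1 q.2 j - τ q.1 q.2 i j
          + ((P q.1 q.2 - p₀) - c₀ ^ 2 * (ρ q.1 q.2 - ρ₀))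
            * (if i = j then (1 : ℝ) else 0)) (y, t)) y t
      = pd (ey i) (pd (ey j) (fun q : (Fin 3 → ℝ) × ℝ =>
          ρ q.1 q.2 * u q.1 q.2 i * u q.1 q.2 j - τ q.1 q.2 i j
            + ((P q.1 q.2 - p₀) - c₀ ^ 2 * (ρ q.1 q.2 - ρ₀))
              * (if i = j then (1 : ℝ) else 0))) (y, t) :=
    fun i j => dY_eq i _ ((pd_contDiff (hTij i j) (ey j)).differentiable (by simp)) y t
  rw [g2]
  simp only [g2', g4]
  exact main (y, t)
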